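/- arXiv:1610.03021 — 10 statements merged into one kernel-verified Lean document; each statement's English description precedes it below -/
import Mathlib

section
/- The functions λ_I and λ_D satisfy λ_I(k) · λ_D(k) = Ω_e Ω_m for all real k. -/
theorem lambdaI_mul_lambdaD
    (ε₀ μ₀ Ωe Ωm : ℝ) (hε : 0 < ε₀) (hμ : 0 < μ₀) (hΩe : 0 < Ωe) (hΩm : 0 < Ωm)
    (k : ℝ) :
    Real.sqrt (k ^ 2 / (2 * ε₀ * μ₀) + (Ωe ^ 2 + Ωm ^ 2) / 2
        - Real.sqrt ((k ^ 2 / (2 * ε₀ * μ₀) + (Ωe ^ 2 - Ωm ^ 2) / 2) ^ 2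
            + k ^ 2 * Ωm ^ 2 / (ε₀ * μ₀)))
      * Real.sqrt (k ^ 2 / (2 * ε₀ * μ₀) + (Ωe ^ 2 + Ωm ^ 2) / 2
        + Real.sqrt ((k ^ 2 / (2 * ε₀ * μ₀) + (Ωe ^ 2 - Ωm ^ 2) / 2) ^ 2
            + k ^ 2 * Ωm ^ 2 / (ε₀ * μ₀)))
      = Ωe * Ωm := by
  set A : ℝ := k ^ 2 / (2 * ε₀ * μ₀) + (Ωe ^ 2 + Ωm ^ 2) / 2 with hAdef
  set D : ℝ := (k ^ 2 / (2 * ε₀ * μ₀) + (Ωe ^ 2 - Ωm ^ 2) / 2) ^ 2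
      + k ^ 2 * Ωm ^ 2 / (ε₀ * μ₀) with hDdef
  have hεμ : 0 < ε₀ * μ₀ := mul_pos hε hμ
  have hk : 0 ≤ k ^ 2 / (2 * ε₀ * μ₀) := by positivity
  have hA : 0 ≤ A := by positivity
  have hD : 0 ≤ D := by positivity
  have hkey : D = A ^ 2 - Ωe ^ 2 * Ωm ^ 2 := by
    rw [hDdef, hAdef]
    field_simp
    ring
  have hDA : D ≤ A ^ 2 := by rw [hkey]; nlinarith
  have hS : Real.sqrt D ≤ A := by
    calc Real.sqrt D ≤ Real.sqrt (A ^ 2) := Real.sqrt_le_sqrt hDA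
    _ = A := by rw [Real.sqrt_sq hA]
  rw [← Real.sqrt_mul (by linarith)]
  have : (A - Real.sqrt D) * (A + Real.sqrt D) = Ωe ^ 2 * Ωm ^ 2 := by
    have hsq : Real.sqrt D ^ 2 = D := Real.sq_sqrt hD
    nlinarith [hsq, hkey]
  rw [this]
  rw [show Ωe ^ 2 * Ωm ^ 2 = (Ωe * Ωm) ^ 2 by ring, Real.sqrt_sq (by positivity)]
end

section
/- For all real k and λ ≠ 0, Θ⁺_{k,λ} := k² - ε_λ μ_λ λ² (with ε_λ = ε₀(1 - Ω_e²/λ²), μ_λ = μ₀(1 - Ω_m²/λ²)) is negative if and only if |λ| ∉ [λ_I(k), λ_D(k)]. -/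
theorem ThetaPlus_neg_iff
    (ε₀ μ₀ Ωe Ωm : ℝ) (hε : 0 < ε₀) (hμ : 0 < μ₀) (hΩe : 0 < Ωe) (hΩm : 0 < Ωm)
    (k l : ℝ) (hl : l ≠ 0) :
    k ^ 2 - (ε₀ * (1 - Ωe ^ 2 / l ^ 2)) * (μ₀ * (1 - Ωm ^ 2 / l ^ 2)) * l ^ 2 < 0 ↔
      |l| ∉ Set.Icc
        (Real.sqrt (k ^ 2 / (2 * ε₀ * μ₀) + (Ωe ^ 2 + Ωm ^ 2) / 2
          - Real.sqrt ((k ^ 2 / (2 * ε₀ * μ₀) + (Ωe ^ 2 - Ωm ^ 2) / 2) ^ 2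
              + k ^ 2 * Ωm ^ 2 / (ε₀ * μ₀))))
        (Real.sqrt (k ^ 2 / (2 * ε₀ * μ₀) + (Ωe ^ 2 + Ωm ^ 2) / 2
          + Real.sqrt ((k ^ 2 / (2 * ε₀ * μ₀) + (Ωe ^ 2 - Ωm ^ 2) / 2) ^ 2
              + k ^ 2 * Ωm ^ 2 / (ε₀ * μ₀)))) := by
  have hε' := hε.ne'
  have hμ' := hμ.ne'
  have hl2 : (0:ℝ) < l ^ 2 := by positivity
  set b : ℝ := k ^ 2 / (2 * ε₀ * μ₀) + (Ωe ^ 2 + Ωm ^ 2) / 2 with hbdef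
  set D : ℝ := (k ^ 2 / (2 * ε₀ * μ₀) + (Ωe ^ 2 - Ωm ^ 2) / 2) ^ 2
      + k ^ 2 * Ωm ^ 2 / (ε₀ * μ₀) with hDdef
  have hD0 : 0 ≤ D := by positivity
  set s : ℝ := Real.sqrt D with hsdef
  have hs0 : 0 ≤ s := Real.sqrt_nonneg _
  have hs2 : s ^ 2 = D := Real.sq_sqrt hD0
  have hb0 : 0 < b := by positivity
  have hid : D = b ^ 2 - Ωe ^ 2 * Ωm ^ 2 := by
    rw [hDdef, hbdef]; field_simp; ring
  have hsb : s < b := by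
    rw [hsdef]
    refine (Real.sqrt_lt' hb0).mpr ?_
    rw [hid]
    nlinarith [mul_pos (pow_pos hΩe 2) (pow_pos hΩm 2)]
  set x : ℝ := l ^ 2 with hxdef
  have hxabs : |l| = Real.sqrt x := (Real.sqrt_sq_eq_abs l).symm
  have key : k ^ 2 - (ε₀ * (1 - Ωe ^ 2 / l ^ 2)) * (μ₀ * (1 - Ωm ^ 2 / l ^ 2)) * l ^ 2 < 0
      ↔ s ^ 2 < (x - b) ^ 2 := by
    have hTx : (k ^ 2 - (ε₀ * (1 - Ωe ^ 2 / l ^ 2)) * (μ₀ * (1 - Ωm ^ 2 / l ^ 2)) * l ^ 2) * x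
        = ε₀ * μ₀ * (s ^ 2 - (x - b) ^ 2) := by
      rw [hs2, hid, hbdef, hxdef]; field_simp; ring
    constructor
    · intro h
      have h2 : ε₀ * μ₀ * (s ^ 2 - (x - b) ^ 2) < 0 := by
        rw [← hTx]; exact mul_neg_of_neg_of_pos h hl2
      by_contra hc
      push_neg at hc
      have h3 : 0 ≤ ε₀ * μ₀ * (s ^ 2 - (x - b) ^ 2) :=
        mul_nonneg (mul_pos hε hμ).le (by linarith)
      linarith
    · intro h
      have h2 : ε₀ * μ₀ * (s ^ 2 - (x - b) ^ 2) < 0 :=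
        mul_neg_of_pos_of_neg (mul_pos hε hμ) (by linarith)
      rw [← hTx] at h2
      exact neg_of_mul_neg_left h2 hl2.le
  rw [key, hxabs, Set.mem_Icc, not_and_or]
  rw [not_le, not_le]
  have h1 : Real.sqrt x < Real.sqrt (b - s) ↔ x < b - s := by
    constructor
    · intro h
      by_contra hc; push_neg at hc
      exact absurd (Real.sqrt_le_sqrt hc) (not_le.mpr h)
    · intro h
      exact (Real.sqrt_lt_sqrt hl2.le h)
  have h2 : Real.sqrt (b + s) < Real.sqrt x ↔ b + s < x := by
    constructor
    · intro h
      by_contra hc; push_neg at hc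
      exact absurd (Real.sqrt_le_sqrt hc) (not_le.mpr h)
    · intro h
      exact (Real.sqrt_lt_sqrt (by linarith) h)
  rw [h1, h2]
  constructor
  · intro h
    have habs : s < |x - b| := lt_of_pow_lt_pow_left₀ 2 (abs_nonneg _) (by rwa [sq_abs])
    rcases le_or_gt b x with hx | hx
    · right; rw [abs_of_nonneg (by linarith)] at habs; linarith
    · left; rw [abs_of_neg (by linarith)] at habs; linarith
  · rintro (h | h)
    · have h3 : s ^ 2 < (b - x) ^ 2 := pow_lt_pow_left₀ (by linarith) hs0 two_ne_zero
      have h4 : (b - x) ^ 2 = (x - b) ^ 2 := by ring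
      linarith
    · have h3 : s ^ 2 < (x - b) ^ 2 := pow_lt_pow_left₀ (by linarith) hs0 two_ne_zero
      exact h3
end

section
/- The function k ↦ λ_I(k) is strictly decreasing on [0,∞) with range (0, min(Ω_e, Ω_m)], i.e., λ_I(0) = min(Ω_e,Ω_m), λ_I is strictly decreasing on ℝ⁺, and λ_I(k) → 0 as k → ∞. -/
private lemma g_pos (m t : ℝ) (hm : 0 < m) (h : m ≤ t) :
    0 < t - Real.sqrt (t ^ 2 - m ^ 2) := by
  have ht : 0 < t := lt_of_lt_of_le hm h
  have : Real.sqrt (t ^ 2 - m ^ 2) < t := by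
    rw [show t ^ 2 - m ^ 2 = (t - m) * (t + m) by ring]
    calc Real.sqrt ((t - m) * (t + m)) < Real.sqrt (t ^ 2) := by
          apply Real.sqrt_lt_sqrt (by nlinarith) (by nlinarith)
      _ = t := Real.sqrt_sq ht.le
  linarith

private lemma g_anti (m t₁ t₂ : ℝ) (hm : 0 < m) (h1 : m ≤ t₁) (h12 : t₁ < t₂) :
    t₂ - Real.sqrt (t₂ ^ 2 - m ^ 2) < t₁ - Real.sqrt (t₁ ^ 2 - m ^ 2) := by
  have h2 : m ≤ t₂ := h1.trans h12.le
  set a := Real.sqrt (t₁ ^ 2 - m ^ 2) with ha_def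
  set b := Real.sqrt (t₂ ^ 2 - m ^ 2) with hb_def
  have ha2 : a ^ 2 = t₁ ^ 2 - m ^ 2 := Real.sq_sqrt (by nlinarith)
  have hb2 : b ^ 2 = t₂ ^ 2 - m ^ 2 := Real.sq_sqrt (by nlinarith)
  have ha0 : 0 ≤ a := Real.sqrt_nonneg _
  have hb0 : 0 ≤ b := Real.sqrt_nonneg _
  have hbt : b < t₂ := by have := g_pos m t₂ hm h2; rw [← hb_def] at this; linarith
  have hat : a < t₁ := by have := g_pos m t₁ hm h1; rw [← ha_def] at this; linarith
  have hab : a ≤ b := by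
    rw [ha_def, hb_def]; exact Real.sqrt_le_sqrt (by nlinarith)
  nlinarith [mul_pos (sub_pos.2 hbt) (show (0:ℝ) < t₁ + a by linarith)]

private lemma g_le (m t : ℝ) (hm : 0 < m) (h : m ≤ t) :
    t - Real.sqrt (t ^ 2 - m ^ 2) ≤ m ^ 2 / t := by
  have ht : 0 < t := lt_of_lt_of_le hm h
  set b := Real.sqrt (t ^ 2 - m ^ 2) with hb_def
  have hb2 : b ^ 2 = t ^ 2 - m ^ 2 := Real.sq_sqrt (by nlinarith)
  have hb0 : 0 ≤ b := Real.sqrt_nonneg _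
  have hbt : b ≤ t := by
    rw [hb_def]
    calc Real.sqrt (t ^ 2 - m ^ 2) ≤ Real.sqrt (t ^ 2) := Real.sqrt_le_sqrt (by nlinarith)
      _ = t := Real.sqrt_sq ht.le
  rw [le_div_iff₀ ht]
  nlinarith [mul_le_mul_of_nonneg_right hbt hb0]

theorem lambdaI_strict_anti_range
    (ε₀ μ₀ Ωe Ωm : ℝ) (hε : 0 < ε₀) (hμ : 0 < μ₀) (hΩe : 0 < Ωe) (hΩm : 0 < Ωm) :
    let lamI : ℝ → ℝ := fun k =>
      Real.sqrt (k ^ 2 / (2 * ε₀ * μ₀) + (Ωe ^ 2 + Ωm ^ 2) / 2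
        - Real.sqrt ((k ^ 2 / (2 * ε₀ * μ₀) + (Ωe ^ 2 - Ωm ^ 2) / 2) ^ 2
            + k ^ 2 * Ωm ^ 2 / (ε₀ * μ₀)))
    lamI 0 = min Ωe Ωm ∧ StrictAntiOn lamI (Set.Ici 0) ∧
      Filter.Tendsto lamI Filter.atTop (nhds 0) := by
  intro lamI
  have hεμ : (0:ℝ) < ε₀ * μ₀ := mul_pos hε hμ
  set m := Ωe * Ωm with hm_def
  have hm : 0 < m := mul_pos hΩe hΩm
  set A : ℝ → ℝ := fun k => k ^ 2 / (2 * ε₀ * μ₀) + (Ωe ^ 2 + Ωm ^ 2) / 2 with hA_def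
  have hAm : ∀ k, m ≤ A k := by
    intro k
    have hk : 0 ≤ k ^ 2 / (2 * ε₀ * μ₀) := by positivity
    simp only [hA_def, hm_def]
    nlinarith [sq_nonneg (Ωe - Ωm)]
  have hA0 : ∀ k, 0 < A k := fun k => lt_of_lt_of_le hm (hAm k)
  have hinner : ∀ k, (k ^ 2 / (2 * ε₀ * μ₀) + (Ωe ^ 2 - Ωm ^ 2) / 2) ^ 2
      + k ^ 2 * Ωm ^ 2 / (ε₀ * μ₀) = (A k) ^ 2 - m ^ 2 := by
    intro k
    simp only [hA_def, hm_def]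
    field_simp
    ring
  have hlam : ∀ k, lamI k = Real.sqrt (A k - Real.sqrt ((A k) ^ 2 - m ^ 2)) := by
    intro k
    show Real.sqrt (k ^ 2 / (2 * ε₀ * μ₀) + (Ωe ^ 2 + Ωm ^ 2) / 2
        - Real.sqrt ((k ^ 2 / (2 * ε₀ * μ₀) + (Ωe ^ 2 - Ωm ^ 2) / 2) ^ 2
            + k ^ 2 * Ωm ^ 2 / (ε₀ * μ₀))) = _
    rw [hinner k]
  have hAmono : ∀ k₁ k₂ : ℝ, 0 ≤ k₁ → k₁ < k₂ → A k₁ < A k₂ := by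
    intro k₁ k₂ h1 h12
    simp only [hA_def]
    have : k₁ ^ 2 < k₂ ^ 2 := by nlinarith
    have h2 : (0:ℝ) < 2 * ε₀ * μ₀ := by positivity
    gcongr
  refine ⟨?_, ?_, ?_⟩
  · -- value at 0
    rw [hlam 0]
    have hA0v : A 0 = (Ωe ^ 2 + Ωm ^ 2) / 2 := by
      simp [hA_def]
    rw [hA0v]
    rcases le_total Ωe Ωm with h | h
    · have h1 : ((Ωe ^ 2 + Ωm ^ 2) / 2) ^ 2 - m ^ 2 = ((Ωm ^ 2 - Ωe ^ 2) / 2) ^ 2 := by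
        simp only [hm_def]; ring
      rw [h1, Real.sqrt_sq (by nlinarith)]
      rw [show (Ωe ^ 2 + Ωm ^ 2) / 2 - (Ωm ^ 2 - Ωe ^ 2) / 2 = Ωe ^ 2 by ring]
      rw [Real.sqrt_sq hΩe.le, min_eq_left h]
    · have h1 : ((Ωe ^ 2 + Ωm ^ 2) / 2) ^ 2 - m ^ 2 = ((Ωe ^ 2 - Ωm ^ 2) / 2) ^ 2 := by
        simp only [hm_def]; ring
      rw [h1, Real.sqrt_sq (by nlinarith)]
      rw [show (Ωe ^ 2 + Ωm ^ 2) / 2 - (Ωe ^ 2 - Ωm ^ 2) / 2 = Ωm ^ 2 by ring]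
      rw [Real.sqrt_sq hΩm.le, min_eq_right h]
  · -- strict anti
    intro k₁ hk₁ k₂ _ h12
    rw [hlam k₁, hlam k₂]
    apply Real.sqrt_lt_sqrt (g_pos m (A k₂) hm (hAm k₂)).le
    exact g_anti m (A k₁) (A k₂) hm (hAm k₁) (hAmono k₁ k₂ hk₁ h12)
  · -- limit
    have hf : Filter.Tendsto (fun k => A k - Real.sqrt ((A k) ^ 2 - m ^ 2))
        Filter.atTop (nhds 0) := by
      have hAtop : Filter.Tendsto A Filter.atTop Filter.atTop := by
        simp only [hA_def]
        apply Filter.tendsto_atTop_add_const_right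
        exact (Filter.tendsto_pow_atTop two_ne_zero).atTop_div_const (by positivity)
      have hbound : Filter.Tendsto (fun k => m ^ 2 / A k) Filter.atTop (nhds 0) :=
        Filter.Tendsto.div_atTop tendsto_const_nhds hAtop
      apply squeeze_zero (fun k => (g_pos m (A k) hm (hAm k)).le)
        (fun k => g_le m (A k) hm (hAm k)) hbound
    have := hf.sqrt
    rw [Real.sqrt_zero] at this
    exact this.congr fun k => (hlam k).symm
end

section
/- The function k ↦ λ_D(k) is strictly increasing on [0,∞), satisfies λ_D(0) = max(Ω_e, Ω_m), and λ_D(k) - λ₀(k) = O(1/k) as k → +∞, where λ₀(k) = k/√(ε₀μ₀). -/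
private lemma aux_mono (a c W : ℝ) (ha : 0 < a) (hcW : 0 < c + W) {u v : ℝ}
    (hu : 0 ≤ u) (huv : u < v) :
    (u * a / 2 + c) ^ 2 + u * W * a < (v * a / 2 + c) ^ 2 + v * W * a := by
  nlinarith [mul_pos (mul_pos (sub_pos.2 huv) ha) hcW,
    mul_nonneg (mul_nonneg (sub_pos.2 huv).le
      (add_nonneg hu (hu.trans huv.le))) (mul_nonneg ha.le ha.le)]

private lemma aux_sq (s k M : ℝ) (hs : s ≠ 0) (hk : k ≠ 0) :
    (k / s + M * s / k) ^ 2 = k ^ 2 / s ^ 2 + 2 * M + M ^ 2 * s ^ 2 / k ^ 2 := by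
  field_simp; ring

set_option maxHeartbeats 1600000 in
theorem lambdaD_strict_mono_asymp
    (ε₀ μ₀ Ωe Ωm : ℝ) (hε : 0 < ε₀) (hμ : 0 < μ₀) (hΩe : 0 < Ωe) (hΩm : 0 < Ωm) :
    let lamD : ℝ → ℝ := fun k =>
      Real.sqrt (k ^ 2 / (2 * ε₀ * μ₀) + (Ωe ^ 2 + Ωm ^ 2) / 2
        + Real.sqrt ((k ^ 2 / (2 * ε₀ * μ₀) + (Ωe ^ 2 - Ωm ^ 2) / 2) ^ 2
            + k ^ 2 * Ωm ^ 2 / (ε₀ * μ₀)))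
    StrictMonoOn lamD (Set.Ici 0) ∧ lamD 0 = max Ωe Ωm ∧
      (fun k => lamD k - k / Real.sqrt (ε₀ * μ₀)) =O[Filter.atTop] (fun k => 1 / k) := by
  intro lamD
  have hA : 0 < ε₀ * μ₀ := mul_pos hε hμ
  have hAne : (ε₀ * μ₀) ≠ 0 := ne_of_gt hA
  have hεne : ε₀ ≠ 0 := ne_of_gt hε
  have hμne : μ₀ ≠ 0 := ne_of_gt hμ
  refine ⟨?_, ?_, ?_⟩
  · -- strict monotonicity
    intro x hx y hy hxy
    simp only [lamD]
    have hx0 : (0:ℝ) ≤ x := hx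
    have h2 : x ^ 2 < y ^ 2 := by nlinarith
    have ha : 0 < 1 / (ε₀ * μ₀) := by positivity
    have hcW : 0 < (Ωe ^ 2 - Ωm ^ 2) / 2 + Ωm ^ 2 := by nlinarith [pow_pos hΩe 2, pow_pos hΩm 2]
    have key := aux_mono (1 / (ε₀ * μ₀)) ((Ωe ^ 2 - Ωm ^ 2) / 2) (Ωm ^ 2) ha hcW (sq_nonneg x) h2
    have harg : (x ^ 2 / (2 * ε₀ * μ₀) + (Ωe ^ 2 - Ωm ^ 2) / 2) ^ 2 + x ^ 2 * Ωm ^ 2 / (ε₀ * μ₀)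
        < (y ^ 2 / (2 * ε₀ * μ₀) + (Ωe ^ 2 - Ωm ^ 2) / 2) ^ 2 + y ^ 2 * Ωm ^ 2 / (ε₀ * μ₀) := by
      have e1 : (x ^ 2 / (2 * ε₀ * μ₀) + (Ωe ^ 2 - Ωm ^ 2) / 2) ^ 2 + x ^ 2 * Ωm ^ 2 / (ε₀ * μ₀)
          = (x ^ 2 * (1 / (ε₀ * μ₀)) / 2 + (Ωe ^ 2 - Ωm ^ 2) / 2) ^ 2
            + x ^ 2 * Ωm ^ 2 * (1 / (ε₀ * μ₀)) := by field_simp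
      have e2 : (y ^ 2 / (2 * ε₀ * μ₀) + (Ωe ^ 2 - Ωm ^ 2) / 2) ^ 2 + y ^ 2 * Ωm ^ 2 / (ε₀ * μ₀)
          = (y ^ 2 * (1 / (ε₀ * μ₀)) / 2 + (Ωe ^ 2 - Ωm ^ 2) / 2) ^ 2
            + y ^ 2 * Ωm ^ 2 * (1 / (ε₀ * μ₀)) := by field_simp
      rw [e1, e2]; exact key
    have h3 : x ^ 2 / (2 * ε₀ * μ₀) < y ^ 2 / (2 * ε₀ * μ₀) := by gcongr
    have hsq : Real.sqrt ((x ^ 2 / (2 * ε₀ * μ₀) + (Ωe ^ 2 - Ωm ^ 2) / 2) ^ 2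
          + x ^ 2 * Ωm ^ 2 / (ε₀ * μ₀))
        ≤ Real.sqrt ((y ^ 2 / (2 * ε₀ * μ₀) + (Ωe ^ 2 - Ωm ^ 2) / 2) ^ 2
          + y ^ 2 * Ωm ^ 2 / (ε₀ * μ₀)) := Real.sqrt_le_sqrt harg.le
    apply Real.sqrt_lt_sqrt
    · positivity
    · linarith
  · -- value at 0
    simp only [lamD]
    have e : (0 ^ 2 / (2 * ε₀ * μ₀) + (Ωe ^ 2 - Ωm ^ 2) / 2) ^ 2 + 0 ^ 2 * Ωm ^ 2 / (ε₀ * μ₀)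
        = ((Ωe ^ 2 - Ωm ^ 2) / 2) ^ 2 := by ring
    rw [e, Real.sqrt_sq_eq_abs]
    rcases le_total Ωm Ωe with h | h
    · have hsq : Ωm ^ 2 ≤ Ωe ^ 2 := by nlinarith
      rw [abs_of_nonneg (by linarith)]
      have e2 : 0 ^ 2 / (2 * ε₀ * μ₀) + (Ωe ^ 2 + Ωm ^ 2) / 2 + (Ωe ^ 2 - Ωm ^ 2) / 2
          = Ωe ^ 2 := by ring
      rw [e2, Real.sqrt_sq hΩe.le, max_eq_left h]
    · have hsq : Ωe ^ 2 ≤ Ωm ^ 2 := by nlinarith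
      rw [abs_of_nonpos (by linarith)]
      have e2 : 0 ^ 2 / (2 * ε₀ * μ₀) + (Ωe ^ 2 + Ωm ^ 2) / 2 + -((Ωe ^ 2 - Ωm ^ 2) / 2)
          = Ωm ^ 2 := by ring
      rw [e2, Real.sqrt_sq hΩm.le, max_eq_right h]
  · -- big-O
    simp only [lamD]
    rw [Asymptotics.isBigO_iff]
    refine ⟨(Ωe ^ 2 + Ωm ^ 2) * Real.sqrt (ε₀ * μ₀), ?_⟩
    filter_upwards [Filter.eventually_ge_atTop 1] with k hk
    have hk0 : (0:ℝ) < k := lt_of_lt_of_le one_pos hk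
    set s := Real.sqrt (ε₀ * μ₀) with hs_def
    have hs : 0 < s := Real.sqrt_pos.2 hA
    have hs2 : s ^ 2 = ε₀ * μ₀ := Real.sq_sqrt hA.le
    set M := Ωe ^ 2 + Ωm ^ 2 with hM_def
    have hM : 0 < M := by positivity
    set X := k ^ 2 / (2 * ε₀ * μ₀) + (Ωe ^ 2 - Ωm ^ 2) / 2 with hX_def
    set arg := X ^ 2 + k ^ 2 * Ωm ^ 2 / (ε₀ * μ₀) with harg_def
    have ediv : k ^ 2 / (2 * ε₀ * μ₀) + k ^ 2 / (2 * ε₀ * μ₀) = k ^ 2 / (ε₀ * μ₀) := by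
      field_simp; ring
    -- lower bound for the inner sqrt
    have hsl : X ≤ Real.sqrt arg := by
      calc X ≤ |X| := le_abs_self _
        _ = Real.sqrt (X ^ 2) := (Real.sqrt_sq_eq_abs X).symm
        _ ≤ Real.sqrt arg := Real.sqrt_le_sqrt (le_add_of_nonneg_right (by positivity))
    -- upper bound for the inner sqrt
    have hXM : 0 ≤ X + Ωm ^ 2 := by
      have h0 : 0 ≤ k ^ 2 / (2 * ε₀ * μ₀) := by positivity
      rw [hX_def]; nlinarith [pow_pos hΩe 2, pow_pos hΩm 2]
    have esq : (X + Ωm ^ 2) ^ 2 - arg = Ωe ^ 2 * Ωm ^ 2 := by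
      rw [harg_def, hX_def]; field_simp; ring
    have hsu : Real.sqrt arg ≤ X + Ωm ^ 2 := by
      calc Real.sqrt arg ≤ Real.sqrt ((X + Ωm ^ 2) ^ 2) := by
            apply Real.sqrt_le_sqrt; nlinarith [mul_pos (pow_pos hΩe 2) (pow_pos hΩm 2)]
        _ = X + Ωm ^ 2 := Real.sqrt_sq hXM
    -- bounds for F
    have hFlb : k ^ 2 / (ε₀ * μ₀)
        ≤ k ^ 2 / (2 * ε₀ * μ₀) + (Ωe ^ 2 + Ωm ^ 2) / 2 + Real.sqrt arg := by
      rw [hX_def] at hsl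
      linarith [ediv, hsl, sq_nonneg Ωe]
    have hFub : k ^ 2 / (2 * ε₀ * μ₀) + (Ωe ^ 2 + Ωm ^ 2) / 2 + Real.sqrt arg
        ≤ k ^ 2 / (ε₀ * μ₀) + M := by
      rw [hX_def] at hsu
      rw [hM_def]
      linarith [ediv, hsu]
    -- lower bound for lamD
    have hlow : k / s ≤ Real.sqrt (k ^ 2 / (2 * ε₀ * μ₀) + (Ωe ^ 2 + Ωm ^ 2) / 2
        + Real.sqrt arg) := by
      have h3 : k / s = Real.sqrt (k ^ 2 / (ε₀ * μ₀)) := by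
        rw [Real.sqrt_div (sq_nonneg k), Real.sqrt_sq hk0.le]
      rw [h3]
      exact Real.sqrt_le_sqrt hFlb
    -- upper bound for lamD
    have hR : (0:ℝ) ≤ k / s + M * s / k := by positivity
    have e2 : (k / s + M * s / k) ^ 2 = k ^ 2 / s ^ 2 + 2 * M + M ^ 2 * s ^ 2 / k ^ 2 := by
      exact aux_sq s k M hs.ne' hk0.ne'
    have hsqle : k ^ 2 / (ε₀ * μ₀) + M ≤ (k / s + M * s / k) ^ 2 := by
      rw [e2, hs2]
      have : 0 ≤ M ^ 2 * (ε₀ * μ₀) / k ^ 2 := by positivity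
      linarith
    have hup : Real.sqrt (k ^ 2 / (2 * ε₀ * μ₀) + (Ωe ^ 2 + Ωm ^ 2) / 2 + Real.sqrt arg)
        ≤ k / s + M * s / k := by
      calc Real.sqrt _ ≤ Real.sqrt ((k / s + M * s / k) ^ 2) :=
            Real.sqrt_le_sqrt (hFub.trans hsqle)
        _ = k / s + M * s / k := Real.sqrt_sq hR
    rw [Real.norm_eq_abs, Real.norm_eq_abs,
      abs_of_nonneg (sub_nonneg.2 hlow), abs_of_nonneg (by positivity : (0:ℝ) ≤ 1 / k)]
    have : M * s * (1 / k) = M * s / k := by ring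
    linarith
end

section
/- Let k_c := √(ε₀μ₀) · Ω_eΩ_m/√(Ω_e² + Ω_m²) and λ_c := Ω_eΩ_m/√(Ω_e² + Ω_m²). Then λ₀(k_c) = λ_I(k_c) = λ_c; moreover λ₀(k) < λ_I(k) for 0 < k < k_c and λ_I(k) < λ₀(k) for k > k_c. -/
lemma cw_eq (E M u : ℝ) (hE : 0 < E) (hM : 0 < M) (hu : 0 ≤ u)
    (h : u * (E + M) = E * M) :
    u / 2 + (E + M) / 2 - Real.sqrt ((u / 2 + (E - M) / 2) ^ 2 + u * M) = u := by
  have hc : 0 ≤ (E + M) / 2 - u / 2 := by nlinarith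
  have harg : (u / 2 + (E - M) / 2) ^ 2 + u * M = ((E + M) / 2 - u / 2) ^ 2 := by
    linear_combination h
  rw [harg, Real.sqrt_sq hc]; ring

lemma cw_lt (E M u : ℝ) (hE : 0 < E) (hM : 0 < M) (hu : 0 ≤ u)
    (h : u * (E + M) < E * M) :
    u < u / 2 + (E + M) / 2 - Real.sqrt ((u / 2 + (E - M) / 2) ^ 2 + u * M) := by
  have hc : 0 < (E + M) / 2 - u / 2 := by nlinarith
  have hS : Real.sqrt ((u / 2 + (E - M) / 2) ^ 2 + u * M) < (E + M) / 2 - u / 2 := by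
    rw [Real.sqrt_lt' hc]; nlinarith
  linarith

lemma cw_gt (E M u : ℝ) (hE : 0 < E) (hM : 0 < M) (hu : 0 ≤ u)
    (h : E * M < u * (E + M)) :
    u / 2 + (E + M) / 2 - Real.sqrt ((u / 2 + (E - M) / 2) ^ 2 + u * M) < u := by
  have key : (E + M) / 2 - u / 2 < Real.sqrt ((u / 2 + (E - M) / 2) ^ 2 + u * M) := by
    rcases le_or_gt ((E + M) / 2 - u / 2) 0 with hc | hc
    · have hupos : 0 < u := by nlinarith
      have : 0 < Real.sqrt ((u / 2 + (E - M) / 2) ^ 2 + u * M) :=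
        Real.sqrt_pos.2 (by nlinarith [sq_nonneg (u / 2 + (E - M) / 2)])
      linarith
    · rw [Real.lt_sqrt hc.le]; nlinarith
  linarith

theorem critical_wavenumber
    (ε₀ μ₀ Ωe Ωm : ℝ) (hε : 0 < ε₀) (hμ : 0 < μ₀) (hΩe : 0 < Ωe) (hΩm : 0 < Ωm) :
    let lam0 : ℝ → ℝ := fun k => k / Real.sqrt (ε₀ * μ₀)
    let lamI : ℝ → ℝ := fun k =>
      Real.sqrt (k ^ 2 / (2 * ε₀ * μ₀) + (Ωe ^ 2 + Ωm ^ 2) / 2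
        - Real.sqrt ((k ^ 2 / (2 * ε₀ * μ₀) + (Ωe ^ 2 - Ωm ^ 2) / 2) ^ 2
            + k ^ 2 * Ωm ^ 2 / (ε₀ * μ₀)))
    let lamc : ℝ := Ωe * Ωm / Real.sqrt (Ωe ^ 2 + Ωm ^ 2)
    let kc : ℝ := Real.sqrt (ε₀ * μ₀) * lamc
    lam0 kc = lamc ∧ lamI kc = lamc ∧
      (∀ k, 0 < k → k < kc → lam0 k < lamI k) ∧
      (∀ k, kc < k → lamI k < lam0 k) := by
  intro lam0 lamI lamc kc
  have ha : (0:ℝ) < ε₀ * μ₀ := mul_pos hε hμ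
  have hE : (0:ℝ) < Ωe ^ 2 := by positivity
  have hM : (0:ℝ) < Ωm ^ 2 := by positivity
  have hEM : (0:ℝ) < Ωe ^ 2 + Ωm ^ 2 := by positivity
  have ht : (0:ℝ) < Real.sqrt (Ωe ^ 2 + Ωm ^ 2) := Real.sqrt_pos.2 hEM
  have ht2 : (Real.sqrt (Ωe ^ 2 + Ωm ^ 2)) ^ 2 = Ωe ^ 2 + Ωm ^ 2 := Real.sq_sqrt hEM.le
  have hsa : (0:ℝ) < Real.sqrt (ε₀ * μ₀) := Real.sqrt_pos.2 ha
  have hsa2 : (Real.sqrt (ε₀ * μ₀)) ^ 2 = ε₀ * μ₀ := Real.sq_sqrt ha.le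
  have hlamc_pos : 0 < lamc := by
    show 0 < Ωe * Ωm / Real.sqrt (Ωe ^ 2 + Ωm ^ 2)
    positivity
  have hkc_pos : 0 < kc := mul_pos hsa hlamc_pos
  have hlamc2 : lamc ^ 2 * (Ωe ^ 2 + Ωm ^ 2) = Ωe ^ 2 * Ωm ^ 2 := by
    show (Ωe * Ωm / Real.sqrt (Ωe ^ 2 + Ωm ^ 2)) ^ 2 * (Ωe ^ 2 + Ωm ^ 2) = Ωe ^ 2 * Ωm ^ 2
    rw [div_pow, ht2]
    field_simp
  have hkc2 : kc ^ 2 = (ε₀ * μ₀) * lamc ^ 2 := by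
    show (Real.sqrt (ε₀ * μ₀) * lamc) ^ 2 = _
    rw [mul_pow, hsa2]
  have hlamI : ∀ k : ℝ, lamI k =
      Real.sqrt ((k ^ 2 / (ε₀ * μ₀)) / 2 + (Ωe ^ 2 + Ωm ^ 2) / 2
        - Real.sqrt (((k ^ 2 / (ε₀ * μ₀)) / 2 + (Ωe ^ 2 - Ωm ^ 2) / 2) ^ 2
            + (k ^ 2 / (ε₀ * μ₀)) * Ωm ^ 2)) := by
    intro k
    have e1 : k ^ 2 / (2 * ε₀ * μ₀) = (k ^ 2 / (ε₀ * μ₀)) / 2 := by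
      rw [div_div]; ring_nf
    have e2 : k ^ 2 * Ωm ^ 2 / (ε₀ * μ₀) = (k ^ 2 / (ε₀ * μ₀)) * Ωm ^ 2 := by
      ring
    show Real.sqrt _ = _
    rw [e1, e2]
  have hsqk : ∀ k : ℝ, (k / Real.sqrt (ε₀ * μ₀)) ^ 2 = k ^ 2 / (ε₀ * μ₀) := by
    intro k; rw [div_pow, hsa2]
  refine ⟨?_, ?_, ?_, ?_⟩
  · show kc / Real.sqrt (ε₀ * μ₀) = lamc
    exact mul_div_cancel_left₀ _ hsa.ne'
  · have huc : kc ^ 2 / (ε₀ * μ₀) = lamc ^ 2 := by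
      rw [hkc2]; field_simp
    rw [hlamI kc, huc, cw_eq _ _ _ hE hM (sq_nonneg _) hlamc2,
      Real.sqrt_sq hlamc_pos.le]
  · intro k hk hkkc
    have hu : 0 < k ^ 2 / (ε₀ * μ₀) := by positivity
    have hk2 : k ^ 2 < kc ^ 2 := by nlinarith
    have hult : k ^ 2 / (ε₀ * μ₀) < lamc ^ 2 := by
      rw [div_lt_iff₀ ha]; nlinarith
    have hlt : k ^ 2 / (ε₀ * μ₀) * (Ωe ^ 2 + Ωm ^ 2) < Ωe ^ 2 * Ωm ^ 2 := by
      calc k ^ 2 / (ε₀ * μ₀) * (Ωe ^ 2 + Ωm ^ 2) < lamc ^ 2 * (Ωe ^ 2 + Ωm ^ 2) := by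
            nlinarith
        _ = Ωe ^ 2 * Ωm ^ 2 := hlamc2
    have key := cw_lt _ _ _ hE hM hu.le hlt
    show k / Real.sqrt (ε₀ * μ₀) < lamI k
    rw [hlamI k, Real.lt_sqrt (by positivity), hsqk k]
    exact key
  · intro k hkck
    have hkpos : 0 < k := lt_trans hkc_pos hkck
    have hu : 0 < k ^ 2 / (ε₀ * μ₀) := by positivity
    have hk2 : kc ^ 2 < k ^ 2 := by nlinarith
    have hult : lamc ^ 2 < k ^ 2 / (ε₀ * μ₀) := by
      rw [lt_div_iff₀ ha]; nlinarith
    have hgt : Ωe ^ 2 * Ωm ^ 2 < k ^ 2 / (ε₀ * μ₀) * (Ωe ^ 2 + Ωm ^ 2) := by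
      calc Ωe ^ 2 * Ωm ^ 2 = lamc ^ 2 * (Ωe ^ 2 + Ωm ^ 2) := hlamc2.symm
        _ < k ^ 2 / (ε₀ * μ₀) * (Ωe ^ 2 + Ωm ^ 2) := by nlinarith
    have key := cw_gt _ _ _ hE hM hu.le hgt
    show lamI k < k / Real.sqrt (ε₀ * μ₀)
    rw [hlamI k, Real.sqrt_lt' (by positivity), hsqk k]
    exact key
end

section
/- For all real k, λ_I(k) ≤ min(Ω_e, Ω_m) ≤ √(Ω_eΩ_m) ≤ max(Ω_e, Ω_m) ≤ λ_D(k). -/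
lemma lambda_aux (K a b : ℝ) (hK : 0 ≤ K) (ha : 0 < a) (hb : 0 < b) :
    Real.sqrt (K + (a^2+b^2)/2 - Real.sqrt ((K+(a^2-b^2)/2)^2 + 2*K*b^2)) ≤ min a b ∧
    max a b ≤ Real.sqrt (K + (a^2+b^2)/2 + Real.sqrt ((K+(a^2-b^2)/2)^2 + 2*K*b^2)) := by
  have hin : 0 ≤ (K+(a^2-b^2)/2)^2 + 2*K*b^2 := by positivity
  set S := Real.sqrt ((K+(a^2-b^2)/2)^2 + 2*K*b^2) with hS
  have hSnn : 0 ≤ S := Real.sqrt_nonneg _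
  have hS2 : S^2 = (K+(a^2-b^2)/2)^2 + 2*K*b^2 := Real.sq_sqrt hin
  constructor
  · have hm : 0 < min a b := lt_min ha hb
    have hXle : K + (a^2+b^2)/2 - S ≤ (min a b)^2 := by
      have hc : 0 ≤ K + (a^2+b^2)/2 - (min a b)^2 := by
        rcases le_total a b with h | h
        · rw [min_eq_left h]; nlinarith
        · rw [min_eq_right h]; nlinarith
      have hsq : (K + (a^2+b^2)/2 - (min a b)^2)^2 ≤ S^2 := by
        rw [hS2]
        rcases le_total a b with h | h
        · rw [min_eq_left h]; nlinarith [mul_nonneg hK (sq_nonneg a)]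
        · rw [min_eq_right h]; nlinarith [mul_nonneg hK (sq_nonneg b)]
      nlinarith [hc, hSnn, hsq]
    calc Real.sqrt (K + (a^2+b^2)/2 - S) ≤ Real.sqrt ((min a b)^2) :=
          Real.sqrt_le_sqrt hXle
      _ = min a b := Real.sqrt_sq hm.le
  · have hM : 0 < max a b := lt_of_lt_of_le ha (le_max_left _ _)
    have hXge : (max a b)^2 ≤ K + (a^2+b^2)/2 + S := by
      have h1 : ((max a b)^2 - K - (a^2+b^2)/2)^2 ≤ S^2 := by
        rw [hS2]
        rcases le_total a b with h | h
        · rw [max_eq_right h]; nlinarith [mul_nonneg hK (sq_nonneg b)]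
        · rw [max_eq_left h]; nlinarith [mul_nonneg hK (sq_nonneg a)]
      nlinarith [h1, hSnn, sq_nonneg ((max a b)^2 - K - (a^2+b^2)/2 - S)]
    calc max a b = Real.sqrt ((max a b)^2) := (Real.sqrt_sq hM.le).symm
      _ ≤ _ := Real.sqrt_le_sqrt hXge

theorem lambdaI_le_min_le_sqrt_le_max_le_lambdaD
    (ε₀ μ₀ Ωe Ωm : ℝ) (hε : 0 < ε₀) (hμ : 0 < μ₀) (hΩe : 0 < Ωe) (hΩm : 0 < Ωm)
    (k : ℝ) :
    Real.sqrt (k ^ 2 / (2 * ε₀ * μ₀) + (Ωe ^ 2 + Ωm ^ 2) / 2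
        - Real.sqrt ((k ^ 2 / (2 * ε₀ * μ₀) + (Ωe ^ 2 - Ωm ^ 2) / 2) ^ 2
            + k ^ 2 * Ωm ^ 2 / (ε₀ * μ₀))) ≤ min Ωe Ωm ∧
    min Ωe Ωm ≤ Real.sqrt (Ωe * Ωm) ∧
    Real.sqrt (Ωe * Ωm) ≤ max Ωe Ωm ∧
    max Ωe Ωm ≤ Real.sqrt (k ^ 2 / (2 * ε₀ * μ₀) + (Ωe ^ 2 + Ωm ^ 2) / 2
        + Real.sqrt ((k ^ 2 / (2 * ε₀ * μ₀) + (Ωe ^ 2 - Ωm ^ 2) / 2) ^ 2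
            + k ^ 2 * Ωm ^ 2 / (ε₀ * μ₀))) := by
  have hk2 : k ^ 2 * Ωm ^ 2 / (ε₀ * μ₀) = 2 * (k ^ 2 / (2 * ε₀ * μ₀)) * Ωm ^ 2 := by
    field_simp
  rw [hk2]
  obtain ⟨h1, h2⟩ := lambda_aux (k ^ 2 / (2 * ε₀ * μ₀)) Ωe Ωm (by positivity) hΩe hΩm
  refine ⟨h1, ?_, ?_, h2⟩
  · have h : (min Ωe Ωm)^2 ≤ Ωe * Ωm := by
      rcases le_total Ωe Ωm with h | h
      · rw [min_eq_left h]; nlinarith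
      · rw [min_eq_right h]; nlinarith
    calc min Ωe Ωm = Real.sqrt ((min Ωe Ωm)^2) := (Real.sqrt_sq (lt_min hΩe hΩm).le).symm
      _ ≤ Real.sqrt (Ωe * Ωm) := Real.sqrt_le_sqrt h
  · have h : Ωe * Ωm ≤ (max Ωe Ωm)^2 := by
      rcases le_total Ωe Ωm with h | h
      · rw [max_eq_right h]; nlinarith
      · rw [max_eq_left h]; nlinarith
    calc Real.sqrt (Ωe * Ωm) ≤ Real.sqrt ((max Ωe Ωm)^2) := Real.sqrt_le_sqrt h
      _ = max Ωe Ωm := Real.sqrt_sq (hΩe.trans_le (le_max_left _ _)).le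
end

section
/- If K := ε₀μ₀(Ω_m² - Ω_e²) < 0 (i.e., Ω_m < Ω_e), then the function k ↦ λ_E(k) := Ω_m·sqrt(1/2 + k²/K - sgn(K)·sqrt(1/4 + k⁴/K²)) = Ω_m·sqrt(1/2 + k²/K + sqrt(1/4 + k⁴/K²)) is strictly decreasing on [k_c, ∞) and λ_E(k) → Ω_m/√2 as k → ∞; if K > 0, λ_E is strictly increasing on [k_c, ∞) with the same limit Ω_m/√2. -/
open Filter Real

private lemma aux1 (u v : ℝ) (hu : 0 ≤ u) (huv : u < v) :
    Real.sqrt (1/4 + v^2) - Real.sqrt (1/4 + u^2) < v - u := by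
  have hv : 0 < v := lt_of_le_of_lt hu huv
  have hsu : u < Real.sqrt (1/4 + u^2) := by
    have h := Real.sqrt_lt_sqrt (sq_nonneg u) (show u^2 < 1/4 + u^2 by linarith)
    rwa [Real.sqrt_sq hu] at h
  have hsv : v < Real.sqrt (1/4 + v^2) := by
    have h := Real.sqrt_lt_sqrt (sq_nonneg v) (show v^2 < 1/4 + v^2 by linarith)
    rwa [Real.sqrt_sq hv.le] at h
  have h1 : (Real.sqrt (1/4 + u^2))^2 = 1/4 + u^2 := Real.sq_sqrt (by positivity)
  have h2 : (Real.sqrt (1/4 + v^2))^2 = 1/4 + v^2 := Real.sq_sqrt (by positivity)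
  nlinarith [Real.sqrt_nonneg (1/4 + u^2), Real.sqrt_nonneg (1/4 + v^2)]

private lemma aux2 : Filter.Tendsto (fun u : ℝ => Real.sqrt (1/4 + u^2) - u)
    Filter.atTop (nhds 0) := by
  apply squeeze_zero' (g := fun u : ℝ => 1/(8*u))
  · filter_upwards [Filter.eventually_ge_atTop (0:ℝ)] with u hu
    have h := Real.sqrt_le_sqrt (show u^2 ≤ 1/4 + u^2 by linarith)
    rw [Real.sqrt_sq hu] at h
    linarith
  · filter_upwards [Filter.eventually_gt_atTop (0:ℝ)] with u hu
    have hb : Real.sqrt (1/4 + u^2) ≤ u + 1/(8*u) := by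
      have h1 : 1/4 + u^2 ≤ (u + 1/(8*u))^2 := by
        have h2 : (u + 1/(8*u))^2 = u^2 + 1/4 + 1/(64*u^2) := by
          field_simp; ring
        rw [h2]
        have : 0 < 1/(64*u^2) := by positivity
        linarith
      calc Real.sqrt (1/4 + u^2) ≤ Real.sqrt ((u + 1/(8*u))^2) := Real.sqrt_le_sqrt h1
        _ = u + 1/(8*u) := Real.sqrt_sq (by positivity)
    linarith
  · have h1 : Filter.Tendsto (fun u : ℝ => 8*u) Filter.atTop Filter.atTop :=
      Filter.tendsto_id.const_mul_atTop (by norm_num : (0:ℝ) < 8)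
    have h2 := tendsto_inv_atTop_zero.comp h1
    apply h2.congr
    intro u
    simp [Function.comp, one_div]

theorem lambdaE_monotone_limit
    (ε₀ μ₀ Ωe Ωm : ℝ) (hε : 0 < ε₀) (hμ : 0 < μ₀) (hΩe : 0 < Ωe) (hΩm : 0 < Ωm)
    (hne : Ωe ≠ Ωm) :
    let K : ℝ := ε₀ * μ₀ * (Ωm ^ 2 - Ωe ^ 2)
    let kc : ℝ := Real.sqrt (ε₀ * μ₀) * (Ωe * Ωm / Real.sqrt (Ωe ^ 2 + Ωm ^ 2))
    let lamE : ℝ → ℝ := fun k =>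
      Ωm * Real.sqrt (1 / 2 + k ^ 2 / K - Real.sign K * Real.sqrt (1 / 4 + k ^ 4 / K ^ 2))
    (K < 0 → StrictAntiOn lamE (Set.Ici kc) ∧
      Filter.Tendsto lamE Filter.atTop (nhds (Ωm / Real.sqrt 2))) ∧
    (0 < K → StrictMonoOn lamE (Set.Ici kc) ∧
      Filter.Tendsto lamE Filter.atTop (nhds (Ωm / Real.sqrt 2))) := by
  intro K kc lamE
  clear_value K
  have hkc : 0 ≤ kc := by
    show (0:ℝ) ≤ Real.sqrt (ε₀ * μ₀) * (Ωe * Ωm / Real.sqrt (Ωe ^ 2 + Ωm ^ 2))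
    positivity
  have h4 : ∀ c : ℝ, Ωm * Real.sqrt (1/2 + c) = Ωm / Real.sqrt 2 → True := fun _ _ => trivial
  constructor
  · -- K < 0
    intro hK
    have hsign : Real.sign K = -1 := Real.sign_of_neg hK
    have hnK : 0 < -K := by linarith
    have hfun : ∀ k : ℝ, lamE k =
        Ωm * Real.sqrt (1/2 + (Real.sqrt (1/4 + (k^2/(-K))^2) - k^2/(-K))) := by
      intro k
      show Ωm * Real.sqrt (1 / 2 + k ^ 2 / K - Real.sign K * Real.sqrt (1 / 4 + k ^ 4 / K ^ 2)) = _
      rw [hsign, show (k^2/(-K))^2 = k^4/K^2 by ring, show k^2/(-K) = -(k^2/K) by ring]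
      congr 2
      ring
    constructor
    · intro x hx y hy hxy
      rw [hfun x, hfun y]
      have hx0 : 0 ≤ x := le_trans hkc hx
      have hx2 : x^2 < y^2 := by nlinarith
      have key := aux1 (x^2/(-K)) (y^2/(-K)) (by positivity)
        ((div_lt_div_iff_of_pos_right hnK).mpr hx2)
      apply mul_lt_mul_of_pos_left _ hΩm
      apply Real.sqrt_lt_sqrt
      · have h := Real.sqrt_le_sqrt (show (y^2/(-K))^2 ≤ 1/4 + (y^2/(-K))^2 by linarith)
        rw [Real.sqrt_sq (by positivity)] at h
        linarith
      · linarith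
    · have h1 : Filter.Tendsto (fun k : ℝ => k^2/(-K)) Filter.atTop Filter.atTop :=
        (tendsto_pow_atTop two_ne_zero).atTop_div_const hnK
      have h2 := aux2.comp h1
      have h3 : Filter.Tendsto
          (fun k : ℝ => Ωm * Real.sqrt (1/2 + (Real.sqrt (1/4 + (k^2/(-K))^2) - k^2/(-K))))
          Filter.atTop (nhds (Ωm * Real.sqrt (1/2 + 0))) :=
        ((Real.continuous_sqrt.tendsto _).comp (tendsto_const_nhds.add h2)).const_mul Ωm
      have h5 : Ωm * Real.sqrt (1/2 + 0) = Ωm / Real.sqrt 2 := by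
        rw [add_zero, show (1/2:ℝ) = 2⁻¹ by norm_num, Real.sqrt_inv, div_eq_mul_inv]
      rw [← h5]
      exact h3.congr (fun k => (hfun k).symm)
  · -- 0 < K
    intro hK
    have hsign : Real.sign K = 1 := Real.sign_of_pos hK
    have hfun : ∀ k : ℝ, lamE k =
        Ωm * Real.sqrt (1/2 - (Real.sqrt (1/4 + (k^2/K)^2) - k^2/K)) := by
      intro k
      show Ωm * Real.sqrt (1 / 2 + k ^ 2 / K - Real.sign K * Real.sqrt (1 / 4 + k ^ 4 / K ^ 2)) = _
      rw [hsign, show (k^2/K)^2 = k^4/K^2 by ring]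
      congr 2
      ring
    constructor
    · intro x hx y hy hxy
      rw [hfun x, hfun y]
      have hx0 : 0 ≤ x := le_trans hkc hx
      have hx2 : x^2 < y^2 := by nlinarith
      have key := aux1 (x^2/K) (y^2/K) (by positivity)
        ((div_lt_div_iff_of_pos_right hK).mpr hx2)
      apply mul_lt_mul_of_pos_left _ hΩm
      apply Real.sqrt_lt_sqrt
      · have hu : (0:ℝ) ≤ x^2/K := by positivity
        have h := Real.sqrt_le_sqrt (show 1/4 + (x^2/K)^2 ≤ (1/2 + x^2/K)^2 by nlinarith)
        rw [Real.sqrt_sq (by positivity)] at h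
        linarith
      · linarith
    · have h1 : Filter.Tendsto (fun k : ℝ => k^2/K) Filter.atTop Filter.atTop :=
        (tendsto_pow_atTop two_ne_zero).atTop_div_const hK
      have h2 := aux2.comp h1
      have h3 : Filter.Tendsto
          (fun k : ℝ => Ωm * Real.sqrt (1/2 - (Real.sqrt (1/4 + (k^2/K)^2) - k^2/K)))
          Filter.atTop (nhds (Ωm * Real.sqrt (1/2 - 0))) :=
        ((Real.continuous_sqrt.tendsto _).comp (tendsto_const_nhds.sub h2)).const_mul Ωm
      have h5 : Ωm * Real.sqrt (1/2 - 0) = Ωm / Real.sqrt 2 := by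
        rw [sub_zero, show (1/2:ℝ) = 2⁻¹ by norm_num, Real.sqrt_inv, div_eq_mul_inv]
      rw [← h5]
      exact h3.congr (fun k => (hfun k).symm)
end

section
/- λ_E(k_c) = λ_c, i.e., at the critical wavenumber k_c = √(ε₀μ₀)·Ω_eΩ_m/√(Ω_e²+Ω_m²), the plasmonic dispersion curve meets the light line: Ω_m²(1/2 + k_c²/K - sgn(K)·sqrt(1/4 + k_c⁴/K²)) = Ω_e²Ω_m²/(Ω_e² + Ω_m²) when K := ε₀μ₀(Ω_m² - Ω_e²) ≠ 0. -/
theorem lambdaE_at_kc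
    (ε₀ μ₀ Ωe Ωm : ℝ) (hε : 0 < ε₀) (hμ : 0 < μ₀) (hΩe : 0 < Ωe) (hΩm : 0 < Ωm)
    (hne : Ωe ≠ Ωm) :
    let K : ℝ := ε₀ * μ₀ * (Ωm ^ 2 - Ωe ^ 2)
    let kc : ℝ := Real.sqrt (ε₀ * μ₀) * (Ωe * Ωm / Real.sqrt (Ωe ^ 2 + Ωm ^ 2))
    Ωm ^ 2 * (1 / 2 + kc ^ 2 / K - Real.sign K * Real.sqrt (1 / 4 + kc ^ 4 / K ^ 2))
      = Ωe ^ 2 * Ωm ^ 2 / (Ωe ^ 2 + Ωm ^ 2) := by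
  intro K kc
  have hS : (0:ℝ) < Ωe ^ 2 + Ωm ^ 2 := by positivity
  have hD : Ωm ^ 2 - Ωe ^ 2 ≠ 0 := by
    intro h
    have h2 : Ωe ^ 2 = Ωm ^ 2 := by linarith
    have : Ωe = Ωm := by nlinarith [sq_nonneg (Ωe - Ωm)]
    exact hne this
  have hεμ : (0:ℝ) < ε₀ * μ₀ := by positivity
  have hKne : K ≠ 0 := mul_ne_zero (ne_of_gt hεμ) hD
  have hkc2 : kc ^ 2 = ε₀ * μ₀ * (Ωe ^ 2 * Ωm ^ 2 / (Ωe ^ 2 + Ωm ^ 2)) := by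
    show (Real.sqrt (ε₀ * μ₀) * (Ωe * Ωm / Real.sqrt (Ωe ^ 2 + Ωm ^ 2))) ^ 2 = _
    rw [mul_pow, div_pow, Real.sq_sqrt hεμ.le, Real.sq_sqrt hS.le]
    ring
  have ht : kc ^ 2 / K = Ωe ^ 2 * Ωm ^ 2 / ((Ωe ^ 2 + Ωm ^ 2) * (Ωm ^ 2 - Ωe ^ 2)) := by
    rw [hkc2]
    show ε₀ * μ₀ * (Ωe ^ 2 * Ωm ^ 2 / (Ωe ^ 2 + Ωm ^ 2)) / (ε₀ * μ₀ * (Ωm ^ 2 - Ωe ^ 2)) = _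
    field_simp
  have hsq : (1:ℝ) / 4 + kc ^ 4 / K ^ 2
      = (1 / 2 + Ωe ^ 4 / ((Ωe ^ 2 + Ωm ^ 2) * (Ωm ^ 2 - Ωe ^ 2))) ^ 2 := by
    have h4 : kc ^ 4 / K ^ 2 = (kc ^ 2 / K) ^ 2 := by
      rw [div_pow]; ring_nf
    rw [h4, ht]
    field_simp
    ring
  have hsqrt : Real.sqrt (1 / 4 + kc ^ 4 / K ^ 2)
      = |1 / 2 + Ωe ^ 4 / ((Ωe ^ 2 + Ωm ^ 2) * (Ωm ^ 2 - Ωe ^ 2))| := by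
    rw [hsq, Real.sqrt_sq_eq_abs]
  have hsign : Real.sign K * Real.sqrt (1 / 4 + kc ^ 4 / K ^ 2)
      = 1 / 2 + Ωe ^ 4 / ((Ωe ^ 2 + Ωm ^ 2) * (Ωm ^ 2 - Ωe ^ 2)) := by
    rcases lt_or_gt_of_ne hD with hneg | hpos
    · have hKneg : K < 0 := by
        have := mul_neg_of_pos_of_neg hεμ hneg
        simpa [K] using this
      have hxneg : 1 / 2 + Ωe ^ 4 / ((Ωe ^ 2 + Ωm ^ 2) * (Ωm ^ 2 - Ωe ^ 2)) < 0 := by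
        have hSD : (Ωe ^ 2 + Ωm ^ 2) * (Ωm ^ 2 - Ωe ^ 2) < 0 :=
          mul_neg_of_pos_of_neg hS hneg
        have hrw : 1 / 2 + Ωe ^ 4 / ((Ωe ^ 2 + Ωm ^ 2) * (Ωm ^ 2 - Ωe ^ 2))
            = ((Ωe ^ 2 + Ωm ^ 2) * (Ωm ^ 2 - Ωe ^ 2) + 2 * Ωe ^ 4)
              / (2 * ((Ωe ^ 2 + Ωm ^ 2) * (Ωm ^ 2 - Ωe ^ 2))) := by
          field_simp
        rw [hrw]
        apply div_neg_of_pos_of_neg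
        · nlinarith [sq_nonneg (Ωe ^ 2), sq_nonneg (Ωm ^ 2), pow_pos hΩe 4, pow_pos hΩm 4]
        · linarith
      rw [Real.sign_of_neg hKneg, hsqrt, abs_of_neg hxneg]
      ring
    · have hKpos : 0 < K := mul_pos hεμ hpos
      have hxpos : 0 ≤ 1 / 2 + Ωe ^ 4 / ((Ωe ^ 2 + Ωm ^ 2) * (Ωm ^ 2 - Ωe ^ 2)) := by
        have hSD : (0:ℝ) < (Ωe ^ 2 + Ωm ^ 2) * (Ωm ^ 2 - Ωe ^ 2) := mul_pos hS hpos
        positivity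
      rw [Real.sign_of_pos hKpos, hsqrt, abs_of_nonneg hxpos]
      ring
  rw [ht, hsign]
  field_simp
  ring
end

section
/- For ζ ∈ ℂ with Im ζ ≠ 0 and any k ∈ ℝ, Θ⁺_{k,ζ} := k² - ε₀μ₀(ζ - Ω_e²/ζ)(ζ - Ω_m²/ζ) does not belong to (-∞, 0] ⊂ ℝ. (Indeed, Im(ζ - Ω_e²/ζ) and Im(ζ - Ω_m²/ζ) both have the same sign as Im ζ, so the product (ζ - Ω_e²/ζ)(ζ - Ω_m²/ζ) ∉ [0,∞).) -/
set_option maxHeartbeats 1000000 in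
theorem ThetaPlus_off_branch_cut
    (ε₀ μ₀ Ωe Ωm : ℝ) (hε : 0 < ε₀) (hμ : 0 < μ₀) (hΩe : 0 < Ωe) (hΩm : 0 < Ωm)
    (k : ℝ) (ζ : ℂ) (hζ : ζ.im ≠ 0) :
    (0 < (ζ - (Ωe : ℂ) ^ 2 / ζ).im * ζ.im) ∧
    (0 < (ζ - (Ωm : ℂ) ^ 2 / ζ).im * ζ.im) ∧
    ((k : ℂ) ^ 2 - (ε₀ : ℂ) * (μ₀ : ℂ) * ((ζ - (Ωe : ℂ) ^ 2 / ζ) * (ζ - (Ωm : ℂ) ^ 2 / ζ)))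
      ∉ {z : ℂ | z.im = 0 ∧ z.re ≤ 0} := by
  have ha : ζ.re = ζ.re := rfl
  set a := ζ.re with ha'
  set b := ζ.im with hb'
  have hn : (0:ℝ) < a ^ 2 + b ^ 2 := by positivity
  have hne : a ^ 2 + b ^ 2 ≠ 0 := ne_of_gt hn
  have hb2 : 0 < b ^ 2 := by positivity
  set n := a ^ 2 + b ^ 2 with hn'
  have hue : (ζ - (Ωe : ℂ) ^ 2 / ζ).im = b + Ωe ^ 2 * b / n := by
    simp [Complex.div_im, Complex.normSq_apply, ← Complex.ofReal_pow, ← ha', ← hb', hn']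
    ring
  have hum : (ζ - (Ωm : ℂ) ^ 2 / ζ).im = b + Ωm ^ 2 * b / n := by
    simp [Complex.div_im, Complex.normSq_apply, ← Complex.ofReal_pow, ← ha', ← hb', hn']
    ring
  have hre : (ζ - (Ωe : ℂ) ^ 2 / ζ).re = a - Ωe ^ 2 * a / n := by
    simp [Complex.div_re, Complex.normSq_apply, ← Complex.ofReal_pow, ← ha', ← hb', hn']
    ring
  have hrm : (ζ - (Ωm : ℂ) ^ 2 / ζ).re = a - Ωm ^ 2 * a / n := by
    simp [Complex.div_re, Complex.normSq_apply, ← Complex.ofReal_pow, ← ha', ← hb', hn']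
    ring
  have h1 : 0 < (ζ - (Ωe : ℂ) ^ 2 / ζ).im * b := by
    rw [hue]
    have he : (b + Ωe ^ 2 * b / n) * b = b ^ 2 + Ωe ^ 2 * b ^ 2 / n := by ring
    rw [he]; positivity
  have h2 : 0 < (ζ - (Ωm : ℂ) ^ 2 / ζ).im * b := by
    rw [hum]
    have he : (b + Ωm ^ 2 * b / n) * b = b ^ 2 + Ωm ^ 2 * b ^ 2 / n := by ring
    rw [he]; positivity
  refine ⟨h1, h2, ?_⟩
  rintro ⟨him, hrele⟩
  set P := (ζ - (Ωe : ℂ) ^ 2 / ζ) with hP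
  set Q := (ζ - (Ωm : ℂ) ^ 2 / ζ) with hQ
  have hIm : (P * Q).im = 0 := by
    have heq : ((k : ℂ) ^ 2 - (ε₀ : ℂ) * (μ₀ : ℂ) * (P * Q)).im
        = -(ε₀ * μ₀) * (P * Q).im := by
      simp [Complex.mul_im, Complex.sub_im, ← Complex.ofReal_pow]
      try ring
    have hεμ : ε₀ * μ₀ ≠ 0 := by positivity
    rw [heq] at him
    rcases mul_eq_zero.mp him with h | h
    · exact absurd (neg_eq_zero.mp h) hεμ
    · exact h
  have hRe' : k ^ 2 - ε₀ * μ₀ * (P * Q).re ≤ 0 := by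
    have heq : ((k : ℂ) ^ 2 - (ε₀ : ℂ) * (μ₀ : ℂ) * (P * Q)).re
        = k ^ 2 - ε₀ * μ₀ * (P * Q).re := by
      simp [Complex.mul_re, Complex.sub_re, ← Complex.ofReal_pow, hIm]
    linarith [heq ▸ hrele]
  have key1 := Complex.mul_im P Q
  rw [hIm, hre, hum, hue, hrm] at key1
  have key2 := Complex.mul_re P Q
  rw [hre, hum, hue, hrm] at key2
  -- P.im * Q.im > 0
  have hPQim : 0 < (b + Ωe ^ 2 * b / n) * (b + Ωm ^ 2 * b / n) := by
    have := mul_pos h1 h2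
    rw [hue, hum] at this
    nlinarith
  have hPQre : 0 < (a - Ωe ^ 2 * a / n) * (a - Ωm ^ 2 * a / n) := by
    have hk2 : 0 ≤ k ^ 2 := sq_nonneg k
    have hεμ : 0 < ε₀ * μ₀ := by positivity
    nlinarith [key2, hRe', hPQim]
  -- clear denominators
  clear_value n a b
  clear h1 h2 him hrele hIm hRe' hue hum hre hrm hP hQ ha ha' hb'
  have e1 : a * b * (n ^ 2 - Ωe ^ 2 * Ωm ^ 2)
      = ((a - Ωe ^ 2 * a / n) * (b + Ωm ^ 2 * b / n)
        + (b + Ωe ^ 2 * b / n) * (a - Ωm ^ 2 * a / n)) * n ^ 2 / 2 := by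
    field_simp
    ring
  have e1' : a * b * (n ^ 2 - Ωe ^ 2 * Ωm ^ 2) = 0 := by
    rw [e1, ← key1]; ring
  have e2 : 0 < a ^ 2 * (n - Ωe ^ 2) * (n - Ωm ^ 2) := by
    have heq : a ^ 2 * (n - Ωe ^ 2) * (n - Ωm ^ 2)
        = ((a - Ωe ^ 2 * a / n) * (a - Ωm ^ 2 * a / n)) * n ^ 2 := by
      field_simp
    rw [heq]
    positivity
  have hane : a ≠ 0 := by
    intro h0
    rw [h0] at e2
    simp at e2
  rcases mul_eq_zero.mp e1' with h | h
  · rcases mul_eq_zero.mp h with h' | h'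
    · exact hane h'
    · exact hζ h'
  · -- n^2 = Ωe^2 * Ωm^2
    have hcd : n ^ 2 = Ωe ^ 2 * Ωm ^ 2 := by linarith
    have ha2 : 0 < a ^ 2 := by positivity
    have hsum : 0 < Ωe ^ 2 + Ωm ^ 2 + 2 * n := by positivity
    have hlt : Ωe ^ 2 + Ωm ^ 2 - 2 * n < 0 := by
      nlinarith [e2, mul_pos ha2 hn, hcd, sq_nonneg a]
    nlinarith [sq_nonneg (Ωe ^ 2 - Ωm ^ 2), mul_pos hsum hsum, hcd, hlt, hsum]
end

section
/- Let f: ℝ² → ℝ be given by f(λ,k) = λ·(1 + Ω_m²/λ²)·μ₀·ε_λ + λ·(1 + Ω_e²/λ²)·ε₀·μ_λ, with ε_λ = ε₀(1 - Ω_e²/λ²), μ_λ = μ₀(1 - Ω_m²/λ²). If 0 < |λ| < min(Ω_e, Ω_m) (so that ε_λ < 0 and μ_λ < 0), then λ·f(λ,k) < 0; hence the product of phase and group velocity v_φ⁺v_g⁺ = 2λ/f(λ,k) is negative in the Drude material (inverse propagation). -/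
theorem inverse_propagation_sign
    (ε₀ μ₀ Ωe Ωm : ℝ) (hε : 0 < ε₀) (hμ : 0 < μ₀) (hΩe : 0 < Ωe) (hΩm : 0 < Ωm)
    (l : ℝ) (h0 : 0 < |l|) (hmin : |l| < min Ωe Ωm) :
    let εl : ℝ := ε₀ * (1 - Ωe ^ 2 / l ^ 2)
    let μl : ℝ := μ₀ * (1 - Ωm ^ 2 / l ^ 2)
    let f : ℝ := μ₀ * (1 + Ωm ^ 2 / l ^ 2) * εl * l + ε₀ * (1 + Ωe ^ 2 / l ^ 2) * μl * l
    l * f < 0 ∧ 2 * l / f < 0 := by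
  intro εl μl f
  have hl : l ≠ 0 := abs_pos.mp h0
  have hl2 : 0 < l ^ 2 := by positivity
  have he2 : l ^ 2 < Ωe ^ 2 := by
    have := lt_of_lt_of_le hmin (min_le_left _ _)
    nlinarith [abs_nonneg l, sq_abs l]
  have hm2 : l ^ 2 < Ωm ^ 2 := by
    have := lt_of_lt_of_le hmin (min_le_right _ _)
    nlinarith [abs_nonneg l, sq_abs l]
  have hε1 : εl < 0 := by
    have : 1 - Ωe ^ 2 / l ^ 2 < 0 := by
      rw [sub_neg, lt_div_iff₀ hl2]; linarith
    exact mul_neg_of_pos_of_neg hε this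
  have hμ1 : μl < 0 := by
    have : 1 - Ωm ^ 2 / l ^ 2 < 0 := by
      rw [sub_neg, lt_div_iff₀ hl2]; linarith
    exact mul_neg_of_pos_of_neg hμ this
  have hpe : 0 < 1 + Ωe ^ 2 / l ^ 2 := by positivity
  have hpm : 0 < 1 + Ωm ^ 2 / l ^ 2 := by positivity
  have h1 : l * f < 0 := by
    have : l * f = μ₀ * (1 + Ωm ^ 2 / l ^ 2) * εl * l ^ 2
        + ε₀ * (1 + Ωe ^ 2 / l ^ 2) * μl * l ^ 2 := by ring
    rw [this]
    have t1 : μ₀ * (1 + Ωm ^ 2 / l ^ 2) * εl * l ^ 2 < 0 := by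
      apply mul_neg_of_neg_of_pos _ hl2
      exact mul_neg_of_pos_of_neg (by positivity) hε1
    have t2 : ε₀ * (1 + Ωe ^ 2 / l ^ 2) * μl * l ^ 2 < 0 := by
      apply mul_neg_of_neg_of_pos _ hl2
      exact mul_neg_of_pos_of_neg (by positivity) hμ1
    linarith
  refine ⟨h1, ?_⟩
  have hf : f ≠ 0 := by intro h; rw [h, mul_zero] at h1; exact absurd h1 (lt_irrefl 0)
  have hlf : l / f < 0 := by
    have : l / f = (l * f) / f ^ 2 := by field_simp
    rw [this]
    exact div_neg_of_neg_of_pos h1 (by positivity)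
  calc 2 * l / f = 2 * (l / f) := by ring
    _ < 0 := by linarith
end
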